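/- arXiv:1607.00066 — 4 statements merged into one kernel-verified Lean document; each statement's English description precedes it below -/
import Mathlib

section
/- Let n > 0 and let λ_1 ≤ λ_2 ≤ ... ≤ λ_{k+1} be positive reals satisfying ∑_{i=1}^k (λ_{k+1} - λ_i)² ≤ (4/n) ∑_{i=1}^k (λ_{k+1} - λ_i) λ_i. Then λ_{k+1} ≤ (1/k)(1 + 4/n) ∑_{i=1}^k λ_i. -/
/-!
Write `A = ∑ᵢ (λₖ₊₁ - λᵢ)` and `S = ∑ᵢ λᵢ`. Cauchy–Schwarz gives `A² ≤ k ∑ᵢ (λₖ₊₁ - λᵢ)²`, and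
Chebyshev's sum inequality for the oppositely ordered sequences `λₖ₊₁ - λᵢ` and `λᵢ` gives
`k ∑ᵢ (λₖ₊₁ - λᵢ) λᵢ ≤ A S`. With Yang's inequality this yields `A² ≤ (4/n) A S`, hence
`A ≤ (4/n) S` since `A ≥ 0`, which is `k λₖ₊₁ ≤ (1 + 4/n) S`.
-/

open Finset

section YangFirstInequality

variable {ι : Type*} (s : Finset ι) (f : ι → ℝ) {a c : ℝ}

theorem sq_sum_sub_le_mul_sum_sub_mul_sum (hc : 0 ≤ c)
    (h : ∑ i ∈ s, (a - f i) ^ 2 ≤ c * ∑ i ∈ s, (a - f i) * f i) :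
    (∑ i ∈ s, (a - f i)) ^ 2 ≤ c * (∑ i ∈ s, (a - f i)) * ∑ i ∈ s, f i := by
  have hanti : AntivaryOn (fun i => a - f i) f s := fun i _ j _ hij => by
    simp only; linarith
  calc (∑ i ∈ s, (a - f i)) ^ 2
      ≤ #s * ∑ i ∈ s, (a - f i) ^ 2 := sq_sum_le_card_mul_sum_sq
    _ ≤ #s * (c * ∑ i ∈ s, (a - f i) * f i) := by gcongr
    _ = c * (#s * ∑ i ∈ s, (a - f i) * f i) := by ring
    _ ≤ c * ((∑ i ∈ s, (a - f i)) * ∑ i ∈ s, f i) :=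
      mul_le_mul_of_nonneg_left hanti.card_mul_sum_le_sum_mul_sum hc
    _ = c * (∑ i ∈ s, (a - f i)) * ∑ i ∈ s, f i := by ring

theorem card_mul_le_one_add_mul_sum_of_sum_sub_sq_le (hc : 0 ≤ c)
    (hf : ∀ i ∈ s, f i ≤ a) (hsum : 0 ≤ ∑ i ∈ s, f i)
    (h : ∑ i ∈ s, (a - f i) ^ 2 ≤ c * ∑ i ∈ s, (a - f i) * f i) :
    #s * a ≤ (1 + c) * ∑ i ∈ s, f i := by
  have hA : 0 ≤ ∑ i ∈ s, (a - f i) := sum_nonneg fun i hi => sub_nonneg.2 (hf i hi)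
  have hsq := sq_sum_sub_le_mul_sum_sub_mul_sum s f hc h
  have hAS : ∑ i ∈ s, (a - f i) ≤ c * ∑ i ∈ s, f i := by
    rcases hA.eq_or_lt with h0 | h0
    · rw [← h0]; positivity
    · nlinarith
  rw [sum_sub_distrib, sum_const, nsmul_eq_mul] at hAS
  linarith

end YangFirstInequality

theorem stmt_1 (n : ℝ) (k : ℕ) (lam : ℕ → ℝ)
    (hn : 0 < n) (hk : 0 < k)
    (hpos : ∀ i ∈ Finset.Icc 1 (k+1), 0 < lam i)
    (hmono : ∀ i j, 1 ≤ i → i ≤ j → j ≤ k+1 → lam i ≤ lam j)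
    (hyang : ∑ i ∈ Finset.Icc 1 k, (lam (k+1) - lam i)^2 ≤
      (4/n) * ∑ i ∈ Finset.Icc 1 k, (lam (k+1) - lam i) * lam i) :
    lam (k+1) ≤ (1/(k:ℝ)) * (1 + 4/n) * ∑ i ∈ Finset.Icc 1 k, lam i := by
  have hle : ∀ i ∈ Icc 1 k, lam i ≤ lam (k + 1) := fun i hi =>
    hmono i (k + 1) (mem_Icc.1 hi).1 ((mem_Icc.1 hi).2.trans k.le_succ) le_rfl
  have hsum : 0 ≤ ∑ i ∈ Icc 1 k, lam i := sum_nonneg fun i hi =>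
    (hpos i (Icc_subset_Icc_right k.le_succ hi)).le
  have hmain := card_mul_le_one_add_mul_sum_of_sum_sub_sq_le (Icc 1 k) lam (by positivity)
    hle hsum hyang
  rw [Nat.card_Icc, Nat.add_sub_cancel] at hmain
  have hk' : (0 : ℝ) < k := by exact_mod_cast hk
  rw [mul_assoc, one_div_mul_eq_div, le_div_iff₀ hk']
  linarith
end

section
/- Let n > 0, k a positive integer, and λ_1 ≤ ... ≤ λ_{k+1} positive reals satisfying ∑_{i=1}^k (λ_{k+1} - λ_i)² ≤ (4/n) ∑_{i=1}^k (λ_{k+1} - λ_i) λ_i. Then λ_{k+1} ≤ (1/k)(1 + 2/n) ∑_{i=1}^k λ_i + sqrt( ((2/(kn)) ∑_{i=1}^k λ_i)² - (1/k)(1 + 4/n) ∑_{j=1}^k (λ_j - (1/k)∑_{i=1}^k λ_i)² ). -/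
/-!
Expanding the squares, Yang's inequality says that `λ_{k+1}` satisfies the quadratic inequality
`k x² - 2 (1 + 2/n) S x + (1 + 4/n) Q ≤ 0`, where `S = ∑ λ_i` and `Q = ∑ λ_i²`, so it lies below
the larger root. Rewriting `Q` through the variance `∑ (λ_j - S/k)² = Q - S²/k` turns that root
into the stated bound.
-/

open Finset

theorem le_div_of_quadratic_nonpos {a b c x : ℝ} (ha : 0 < a)
    (h : a * x ^ 2 - 2 * b * x + c ≤ 0) : x ≤ (b + √(b ^ 2 - a * c)) / a := by
  have hsq : (a * x - b) ^ 2 ≤ b ^ 2 - a * c := by nlinarith [mul_le_mul_of_nonneg_left h ha.le]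
  have hroot : a * x - b ≤ √(b ^ 2 - a * c) :=
    (le_abs_self _).trans (Real.abs_le_sqrt hsq)
  rw [le_div_iff₀ ha]
  linarith

namespace Finset

variable {ι : Type*} (s : Finset ι) (f : ι → ℝ)

theorem sum_sub_sq_eq (L : ℝ) :
    ∑ i ∈ s, (L - f i) ^ 2 = #s * L ^ 2 - 2 * L * ∑ i ∈ s, f i + ∑ i ∈ s, f i ^ 2 := by
  simp only [sub_sq, sum_add_distrib, sum_sub_distrib, sum_const, nsmul_eq_mul, ← mul_sum]

theorem sum_sub_mul_self_eq (L : ℝ) :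
    ∑ i ∈ s, (L - f i) * f i = L * ∑ i ∈ s, f i - ∑ i ∈ s, f i ^ 2 := by
  simp only [sub_mul, sum_sub_distrib, ← mul_sum, sq]

theorem sum_sub_mean_sq (hs : s.Nonempty) :
    ∑ i ∈ s, (f i - (1 / #s) * ∑ j ∈ s, f j) ^ 2 =
      ∑ i ∈ s, f i ^ 2 - (∑ i ∈ s, f i) ^ 2 / #s := by
  have hcard : (#s : ℝ) ≠ 0 := by exact_mod_cast hs.card_pos.ne'
  simp only [sub_sq, sum_add_distrib, sum_sub_distrib, sum_const, nsmul_eq_mul, ← sum_mul,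
    ← mul_sum]
  field_simp
  ring

end Finset

theorem yang_quadratic_nonpos {ι : Type*} (s : Finset ι) (f : ι → ℝ) {n L : ℝ}
    (hyang : ∑ i ∈ s, (L - f i) ^ 2 ≤ (4 / n) * ∑ i ∈ s, (L - f i) * f i) :
    #s * L ^ 2 - 2 * ((1 + 2 / n) * ∑ i ∈ s, f i) * L + (1 + 4 / n) * ∑ i ∈ s, f i ^ 2 ≤ 0 := by
  rw [sum_sub_sq_eq, sum_sub_mul_self_eq] at hyang
  linear_combination hyang

theorem le_of_yang_inequality {ι : Type*} (s : Finset ι) (f : ι → ℝ) (hs : s.Nonempty)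
    {n L : ℝ} (hn : 0 < n)
    (hyang : ∑ i ∈ s, (L - f i) ^ 2 ≤ (4 / n) * ∑ i ∈ s, (L - f i) * f i) :
    L ≤ (1 / #s) * (1 + 2 / n) * ∑ i ∈ s, f i
      + √(((2 / (#s * n)) * ∑ i ∈ s, f i) ^ 2
        - (1 / #s) * (1 + 4 / n) * ∑ j ∈ s, (f j - (1 / #s) * ∑ i ∈ s, f i) ^ 2) := by
  have hm : (0 : ℝ) < #s := by exact_mod_cast hs.card_pos
  set S := ∑ i ∈ s, f i
  set Q := ∑ i ∈ s, f i ^ 2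
  have hroot := le_div_of_quadratic_nonpos hm (yang_quadratic_nonpos s f hyang)
  have hdisc : ((2 / (#s * n)) * S) ^ 2 - (1 / #s) * (1 + 4 / n) * (Q - S ^ 2 / #s) =
      (((1 + 2 / n) * S) ^ 2 - #s * ((1 + 4 / n) * Q)) / (#s : ℝ) ^ 2 := by
    field_simp
    ring
  rw [sum_sub_mean_sq s f hs, hdisc, Real.sqrt_div' _ (sq_nonneg _), Real.sqrt_sq hm.le]
  calc L ≤ _ := hroot
    _ = _ := by ring

theorem stmt_4_general (n : ℝ) (k : ℕ) (lam : ℕ → ℝ)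
    (hn : 0 < n) (hk : 0 < k)
    (hyang : ∑ i ∈ Finset.Icc 1 k, (lam (k+1) - lam i)^2 ≤
      (4/n) * ∑ i ∈ Finset.Icc 1 k, (lam (k+1) - lam i) * lam i) :
    lam (k+1) ≤ (1/(k:ℝ)) * (1 + 2/n) * ∑ i ∈ Finset.Icc 1 k, lam i
      + Real.sqrt (((2/((k:ℝ)*n)) * ∑ i ∈ Finset.Icc 1 k, lam i)^2
        - (1/(k:ℝ)) * (1 + 4/n) *
          ∑ j ∈ Finset.Icc 1 k, (lam j - (1/(k:ℝ)) * ∑ i ∈ Finset.Icc 1 k, lam i)^2) := by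
  have hcard : #(Icc 1 k) = k := by simp
  simpa only [hcard] using
    le_of_yang_inequality (Icc 1 k) lam (nonempty_Icc.mpr hk) hn hyang

theorem stmt_4 (n : ℝ) (k : ℕ) (lam : ℕ → ℝ)
    (hn : 0 < n) (hk : 0 < k)
    (hpos : ∀ i ∈ Finset.Icc 1 (k+1), 0 < lam i)
    (hmono : ∀ i j, 1 ≤ i → i ≤ j → j ≤ k+1 → lam i ≤ lam j)
    (hyang : ∑ i ∈ Finset.Icc 1 k, (lam (k+1) - lam i)^2 ≤
      (4/n) * ∑ i ∈ Finset.Icc 1 k, (lam (k+1) - lam i) * lam i) :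
    lam (k+1) ≤ (1/(k:ℝ)) * (1 + 2/n) * ∑ i ∈ Finset.Icc 1 k, lam i
      + Real.sqrt (((2/((k:ℝ)*n)) * ∑ i ∈ Finset.Icc 1 k, lam i)^2
        - (1/(k:ℝ)) * (1 + 4/n) *
          ∑ j ∈ Finset.Icc 1 k, (lam j - (1/(k:ℝ)) * ∑ i ∈ Finset.Icc 1 k, lam i)^2) :=
  stmt_4_general n k lam hn hk hyang
end

section
/- Let n, c > 0 with C(n,k,c) = 1 - (c/(3n)) (k/(k+1))^{4c/n} (1 + 2c/n)(1 + 4c/n)/(k+1)³ for a positive integer k. Then 0 < C(n,k,c) < 1. -/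
/-!
Write `m = k + 1`, `x = c / n` and `t = x / m`. Since `k / m = 1 - 1 / m ≤ exp (-1 / m)`, the power
`(k / m) ^ (4x)` is at most `exp (-4t)`, and `1 + 2x ≤ m (1 + 2t)`, `1 + 4x ≤ m (1 + 4t)` absorb two of
the three factors `m`. What is left is `(t / 3) (1 + 2t) (1 + 4t) exp (-4t)`, and the cubic
`t (1 + 2t) (1 + 4t) / 3` is dominated termwise by the Taylor polynomial `1 + 4t + (4t)² / 2 + (4t)³ / 6`
of `exp (4t)`.
-/

open Real

lemma one_sub_rpow_le_exp_neg_mul {a y : ℝ} (ha : a ≤ 1) (hy : 0 ≤ y) :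
    (1 - a) ^ y ≤ exp (-(a * y)) :=
  calc (1 - a) ^ y ≤ exp (-a) ^ y := rpow_le_rpow (by linarith) (one_sub_le_exp_neg a) hy
    _ = exp (-(a * y)) := by rw [← exp_mul, neg_mul]

lemma cubic_mul_exp_neg_lt {t : ℝ} (ht : 0 ≤ t) :
    t / 3 * (1 + 2 * t) * (1 + 4 * t) * exp (-(4 * t)) < 1 := by
  have htaylor : ∑ i ∈ Finset.range 4, (4 * t) ^ i / i.factorial ≤ exp (4 * t) :=
    sum_le_exp_of_nonneg (by positivity) 4
  simp only [Finset.sum_range_succ, Finset.range_zero, Finset.sum_empty, Nat.factorial] at htaylor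
  norm_num at htaylor
  have hcubic : t / 3 * (1 + 2 * t) * (1 + 4 * t) < exp (4 * t) := by
    nlinarith [pow_nonneg ht 2, pow_nonneg ht 3]
  calc t / 3 * (1 + 2 * t) * (1 + 4 * t) * exp (-(4 * t))
      < exp (4 * t) * exp (-(4 * t)) := mul_lt_mul_of_pos_right hcubic (exp_pos _)
    _ = 1 := by rw [← exp_add, add_neg_cancel, exp_zero]

lemma mul_rpow_div_succ_mul_lt_one {k x : ℝ} (hk : 0 ≤ k) (hx : 0 ≤ x) :
    x / 3 * (k / (k + 1)) ^ (4 * x) * ((1 + 2 * x) * (1 + 4 * x) / (k + 1) ^ 3) < 1 := by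
  set m := k + 1
  have hm1 : 1 ≤ m := by linarith
  have hm0 : 0 < m := by linarith
  set t := x / m
  have hxt : x = m * t := by simp only [t]; field_simp
  have ht : 0 ≤ t := by positivity
  have hpow : (k / m) ^ (4 * x) ≤ exp (-(4 * t)) := by
    have hkm : k / m = 1 - 1 / m := by field_simp; ring
    rw [hkm]
    convert one_sub_rpow_le_exp_neg_mul (div_le_one_of_le₀ hm1 hm0.le) (by positivity : 0 ≤ 4 * x)
      using 2
    rw [hxt]; field_simp
  have hfactors : (1 + 2 * x) * (1 + 4 * x) ≤ m ^ 2 * ((1 + 2 * t) * (1 + 4 * t)) := by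
    have h2 : 1 + 2 * x ≤ m * (1 + 2 * t) := by rw [hxt]; nlinarith
    have h4 : 1 + 4 * x ≤ m * (1 + 4 * t) := by rw [hxt]; nlinarith
    calc (1 + 2 * x) * (1 + 4 * x) ≤ (m * (1 + 2 * t)) * (m * (1 + 4 * t)) :=
          mul_le_mul h2 h4 (by positivity) (by positivity)
      _ = _ := by ring
  calc x / 3 * (k / m) ^ (4 * x) * ((1 + 2 * x) * (1 + 4 * x) / m ^ 3)
      ≤ x / 3 * exp (-(4 * t)) * (m ^ 2 * ((1 + 2 * t) * (1 + 4 * t)) / m ^ 3) := by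
        gcongr
    _ = t / 3 * (1 + 2 * t) * (1 + 4 * t) * exp (-(4 * t)) := by rw [hxt]; field_simp
    _ < 1 := cubic_mul_exp_neg_lt ht

theorem stmt_10 (n c : ℝ) (k : ℕ) (hn : 0 < n) (hc : 0 < c) (hk : 0 < k) :
    0 < 1 - (c/(3*n)) * ((k:ℝ)/((k:ℝ)+1))^(4*c/n) * ((1 + 2*c/n) * (1 + 4*c/n) / ((k:ℝ)+1)^3)
    ∧ 1 - (c/(3*n)) * ((k:ℝ)/((k:ℝ)+1))^(4*c/n) * ((1 + 2*c/n) * (1 + 4*c/n) / ((k:ℝ)+1)^3) < 1 := by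
  have hk' : (0 : ℝ) < k := by exact_mod_cast hk
  have hx : 0 < c / n := div_pos hc hn
  have hform : ∀ a : ℝ, a * c / n = a * (c / n) := fun a => mul_div_assoc a c n
  rw [div_mul_eq_div_div_swap, hform 2, hform 4]
  have hlt := mul_rpow_div_succ_mul_lt_one hk'.le hx.le
  have hpos : 0 < c / n / 3 * ((k:ℝ) / (k + 1)) ^ (4 * (c / n))
      * ((1 + 2 * (c / n)) * (1 + 4 * (c / n)) / ((k:ℝ) + 1) ^ 3) := by positivity
  constructor <;> linarith
end

section
/- Let n > 0 and suppose a sequence of positive reals (υ_i) satisfies: (i) for every k, F_k := (1 + 2/n)((1/k)∑_{i=1}^k υ_i)² - (1/k)∑_{i=1}^k υ_i² satisfies F_{k+l}/(k+l)^{4/n} ≤ F_k/k^{4/n} for all positive integers l; (ii) lim_{m→∞} ((1/m)∑_{i=1}^m υ_i)/m^{2/n} = a(n) and lim_{m→∞} ((1/m)∑_{i=1}^m υ_i²)/m^{4/n} = b(n), where a(n) = (n/(n+2))·c and b(n) = (n/(n+4))·c² for some constant c > 0. Then for every positive integer k, (1/k)∑_{i=1}^k υ_i ≥ (n/√((n+2)(n+4)))·c·k^{2/n}.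 -/
/-!
By (ii), `F m / m ^ (4 / n)` tends to `(1 + 2 / n) a(n) ^ 2 - b(n) = 2 n c ^ 2 / ((n + 2) (n + 4))`,
and by (i) this limit bounds every `F k / k ^ (4 / n)` from below. Cauchy–Schwarz gives
`F k ≤ (2 / n) A ^ 2` for the mean `A` of the first `k` terms, and solving for `A` gives the bound.
-/

open Filter Topology Finset

lemma rpow_two_mul_eq_sq {x : ℝ} (hx : 0 ≤ x) (p : ℝ) : x ^ (2 * p) = (x ^ p) ^ 2 := by
  simpa [mul_comm] using Real.rpow_mul_natCast hx p 2

lemma tendsto_quadratic_div_rpow {A B : ℕ → ℝ} {p a b : ℝ} (κ : ℝ)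
    (hA : Tendsto (fun m : ℕ => A m / (m : ℝ) ^ p) atTop (𝓝 a))
    (hB : Tendsto (fun m : ℕ => B m / (m : ℝ) ^ (2 * p)) atTop (𝓝 b)) :
    Tendsto (fun m : ℕ => (κ * A m ^ 2 - B m) / (m : ℝ) ^ (2 * p)) atTop
      (𝓝 (κ * a ^ 2 - b)) := by
  refine (((hA.pow 2).const_mul κ).sub hB).congr fun m => ?_
  rw [rpow_two_mul_eq_sq (Nat.cast_nonneg m), div_pow, sub_div, mul_div_assoc]

lemma le_of_tendsto_of_forall_add_le {α : Type*} [TopologicalSpace α] [Preorder α]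
    [ClosedIicTopology α] {g : ℕ → α} {L : α} {k : ℕ} (hg : Tendsto g atTop (𝓝 L))
    (h : ∀ l, 1 ≤ l → g (k + l) ≤ g k) : L ≤ g k := by
  refine le_of_tendsto (hg.comp (tendsto_add_atTop_nat k)) (eventually_atTop.2 ⟨1, fun l hl => ?_⟩)
  simpa [add_comm l k] using h l hl

lemma div_sqrt_mul_le_of_le_two_div_mul_sq {n c x A : ℝ} (hn : 0 < n) (hA : 0 ≤ A)
    (h : 2 * n / ((n + 2) * (n + 4)) * c ^ 2 * x ^ 2 ≤ 2 / n * A ^ 2) :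
    n / √((n + 2) * (n + 4)) * c * x ≤ A := by
  refine (abs_le_of_sq_le_sq' ?_ hA).2
  calc (n / √((n + 2) * (n + 4)) * c * x) ^ 2
      = n / 2 * (2 * n / ((n + 2) * (n + 4)) * c ^ 2 * x ^ 2) := by
        rw [mul_pow, mul_pow, div_pow, Real.sq_sqrt (by positivity)]
        field_simp
    _ ≤ n / 2 * (2 / n * A ^ 2) := by gcongr
    _ = A ^ 2 := by field_simp

theorem stmt_16_general (n c : ℝ) (hn : 0 < n) (ups : ℕ → ℝ)
    (hpos : ∀ i, 1 ≤ i → 0 < ups i)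
    (F : ℕ → ℝ)
    (hFdef : ∀ k : ℕ, 1 ≤ k →
      F k = (1 + 2/n) * ((1/(k:ℝ)) * ∑ i ∈ Finset.Icc 1 k, ups i)^2
        - (1/(k:ℝ)) * ∑ i ∈ Finset.Icc 1 k, (ups i)^2)
    (hFmono : ∀ k l : ℕ, 1 ≤ k → 1 ≤ l →
      F (k+l) / ((k:ℝ)+(l:ℝ))^(4/n) ≤ F k / (k:ℝ)^(4/n))
    (hlim1 : Filter.Tendsto
      (fun m : ℕ => ((1/(m:ℝ)) * ∑ i ∈ Finset.Icc 1 m, ups i) / (m:ℝ)^(2/n))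
      Filter.atTop (nhds ((n/(n+2)) * c)))
    (hlim2 : Filter.Tendsto
      (fun m : ℕ => ((1/(m:ℝ)) * ∑ i ∈ Finset.Icc 1 m, (ups i)^2) / (m:ℝ)^(4/n))
      Filter.atTop (nhds ((n/(n+4)) * c^2))) :
    ∀ k : ℕ, 1 ≤ k →
      (1/(k:ℝ)) * ∑ i ∈ Finset.Icc 1 k, ups i
        ≥ (n / Real.sqrt ((n+2)*(n+4))) * c * (k:ℝ)^(2/n) := by
  intro k hk
  rw [show (4 : ℝ) / n = 2 * (2 / n) by ring] at hFmono hlim2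
  have hF : Tendsto (fun m : ℕ => F m / (m : ℝ) ^ (2 * (2 / n))) atTop
      (𝓝 (2 * n / ((n + 2) * (n + 4)) * c ^ 2)) := by
    have h := tendsto_quadratic_div_rpow (1 + 2 / n) hlim1 hlim2
    rw [show (1 + 2 / n) * (n / (n + 2) * c) ^ 2 - n / (n + 4) * c ^ 2
      = 2 * n / ((n + 2) * (n + 4)) * c ^ 2 by field_simp; ring] at h
    exact h.congr' (eventually_atTop.2 ⟨1, fun m hm => by dsimp only; rw [hFdef m hm]⟩)
  set A := (1 / (k : ℝ)) * ∑ i ∈ Icc 1 k, ups i with hA_def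
  have hLk : 2 * n / ((n + 2) * (n + 4)) * c ^ 2 * (k : ℝ) ^ (2 * (2 / n)) ≤ F k := by
    rw [← le_div_iff₀ (by positivity)]
    exact le_of_tendsto_of_forall_add_le hF fun l hl => by exact_mod_cast hFmono k l hk hl
  have hCS : A ^ 2 ≤ (1 / (k : ℝ)) * ∑ i ∈ Icc 1 k, ups i ^ 2 := by
    rw [hA_def]
    simpa [div_eq_inv_mul] using sum_div_card_sq_le_sum_sq_div_card (s := Icc 1 k) (f := ups)
  have hFk : F k ≤ 2 / n * A ^ 2 := by
    rw [hFdef k hk]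
    linarith
  have hA : 0 ≤ A :=
    mul_nonneg (by positivity) (sum_nonneg fun i hi => (hpos i (mem_Icc.1 hi).1).le)
  refine div_sqrt_mul_le_of_le_two_div_mul_sq hn hA ?_
  rw [← rpow_two_mul_eq_sq (Nat.cast_nonneg k)]
  exact hLk.trans hFk

theorem stmt_16 (n c : ℝ) (hn : 0 < n) (hc : 0 < c) (ups : ℕ → ℝ)
    (hpos : ∀ i, 1 ≤ i → 0 < ups i)
    (F : ℕ → ℝ)
    (hFdef : ∀ k : ℕ, 1 ≤ k →
      F k = (1 + 2/n) * ((1/(k:ℝ)) * ∑ i ∈ Finset.Icc 1 k, ups i)^2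
        - (1/(k:ℝ)) * ∑ i ∈ Finset.Icc 1 k, (ups i)^2)
    (hFmono : ∀ k l : ℕ, 1 ≤ k → 1 ≤ l →
      F (k+l) / ((k:ℝ)+(l:ℝ))^(4/n) ≤ F k / (k:ℝ)^(4/n))
    (hlim1 : Filter.Tendsto
      (fun m : ℕ => ((1/(m:ℝ)) * ∑ i ∈ Finset.Icc 1 m, ups i) / (m:ℝ)^(2/n))
      Filter.atTop (nhds ((n/(n+2)) * c)))
    (hlim2 : Filter.Tendsto
      (fun m : ℕ => ((1/(m:ℝ)) * ∑ i ∈ Finset.Icc 1 m, (ups i)^2) / (m:ℝ)^(4/n))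
      Filter.atTop (nhds ((n/(n+4)) * c^2))) :
    ∀ k : ℕ, 1 ≤ k →
      (1/(k:ℝ)) * ∑ i ∈ Finset.Icc 1 k, ups i
        ≥ (n / Real.sqrt ((n+2)*(n+4))) * c * (k:ℝ)^(2/n) :=
  stmt_16_general n c hn ups hpos F hFdef hFmono hlim1 hlim2
end
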